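/- arXiv:1812.03862 — 4 statements merged into one kernel-verified Lean document; each statement's English description precedes it below -/
import Mathlib

section
/- Under the assumption C_{h,ho} − μ s_h C_{e,ho} > 0, and assuming the discrete optimal power law P* is feasible (which holds whenever C_{h,ho}·P̄ > μ s_h L^{β−1}·Σ_j p_j/Υ_j), the vector P* minimizes the load factor over the feasible set: for every P ∈ F one has ρ(P*) ≤ ρ(P). -/
open Finset

/-- The load factor `ρ(P)` of the small cell system with `I` speed classes,
class probabilities `p`, conditional means `ups i = E[1/V | V ∈ 𝓘 i]`,
and power allocation `P`. -/
noncomputable def loadFactor (I : ℕ) (p ups : Fin I → ℝ)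
    (Cbe Cbh Ceho Chho μ sh lam K L β : ℝ) (P : Fin I → ℝ) : ℝ :=
  (lam * L ^ 2 / K) * ∑ i, p i * ups i *
    (Cbe + Cbh * (1 - (P i * ups i * L ^ (1 - β)) * Ceho) /
      ((P i * ups i * L ^ (1 - β)) * Chho - μ * sh))

/-- Feasibility: positive denominators `δ_i C_{h,ho} - μ s_h > 0` and
average power at most `P̄`. -/
def Feasible (I : ℕ) (p ups : Fin I → ℝ) (Chho μ sh L β Pbar : ℝ)
    (P : Fin I → ℝ) : Prop :=
  (∀ i, 0 < (P i * ups i * L ^ (1 - β)) * Chho - μ * sh) ∧ ∑ i, p i * P i ≤ Pbar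

/-- Pointwise algebraic identity splitting each load-factor term into a
constant part and a part proportional to `1/x` where `x = d·Chho - μ·sh`. -/
lemma loadFactor_term_eq (Cbe Cbh Ceho Chho μ sh d : ℝ) (hChho : Chho ≠ 0)
    (hx : d * Chho - μ * sh ≠ 0) :
    Cbe + Cbh * (1 - d * Ceho) / (d * Chho - μ * sh) =
      (Cbe - Cbh * Ceho / Chho) +
        (Cbh * (Chho - μ * sh * Ceho) / Chho) * (1 / (d * Chho - μ * sh)) := by
  field_simp
  ring

/-- The discrete optimal power law is feasible and minimizes the load factor
over the feasible set. -/
theorem discrete_power_law_optimal (I : ℕ) (hI : 2 ≤ I) (p ups : Fin I → ℝ)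
    (hp : ∀ i, 0 < p i) (hpsum : ∑ i, p i = 1) (hups : ∀ i, 0 < ups i)
    (Cbe Cbh Ceho Chho μ sh lam K L β Pbar : ℝ)
    (hCbe : 0 < Cbe) (hCbh : 0 < Cbh) (hCeho : 0 < Ceho) (hChho : 0 < Chho)
    (hμ : 0 < μ) (hsh : 0 < sh) (hlam : 0 < lam) (hK : 0 < K) (hL : 0 < L)
    (hβ : 1 < β) (hPbar : 0 < Pbar)
    (hC : 0 < Chho - μ * sh * Ceho)
    (hbudget : μ * sh * L ^ (β - 1) * ∑ j, p j / ups j < Chho * Pbar) :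
    Feasible I p ups Chho μ sh L β Pbar
      (fun i => Pbar + (μ * sh * L ^ (β - 1) / Chho) * (1 / ups i - ∑ j, p j / ups j)) ∧
    ∀ P : Fin I → ℝ, Feasible I p ups Chho μ sh L β Pbar P →
      loadFactor I p ups Cbe Cbh Ceho Chho μ sh lam K L β
        (fun i => Pbar + (μ * sh * L ^ (β - 1) / Chho) * (1 / ups i - ∑ j, p j / ups j)) ≤
      loadFactor I p ups Cbe Cbh Ceho Chho μ sh lam K L β P := by
  set S : ℝ := ∑ j, p j / ups j with hS
  set Pstar : Fin I → ℝ :=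
    fun i => Pbar + (μ * sh * L ^ (β - 1) / Chho) * (1 / ups i - S) with hPstar
  set B : ℝ := Chho * Pbar * L ^ (1 - β) - μ * sh * S with hB
  have hL1 : (0:ℝ) < L ^ (1 - β) := Real.rpow_pos_of_pos hL _
  have hL2 : (0:ℝ) < L ^ (β - 1) := Real.rpow_pos_of_pos hL _
  have hLmul : L ^ (1 - β) * L ^ (β - 1) = 1 := by
    rw [← Real.rpow_add hL]; norm_num
  have hChho' : Chho ≠ 0 := ne_of_gt hChho
  -- B > 0
  have hBpos : 0 < B := by
    have h1 : 0 < (Chho * Pbar - μ * sh * L ^ (β - 1) * S) * L ^ (1 - β) :=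
      mul_pos (by linarith) hL1
    have h2 : (Chho * Pbar - μ * sh * L ^ (β - 1) * S) * L ^ (1 - β) = B := by
      rw [hB]; linear_combination (-(μ * sh * S)) * hLmul
    linarith [h2 ▸ h1]
  -- the key denominator identity at Pstar
  have hxstar : ∀ i, (Pstar i * ups i * L ^ (1 - β)) * Chho - μ * sh = ups i * B := by
    intro i
    have hu : ups i ≠ 0 := ne_of_gt (hups i)
    have hc : μ * sh * L ^ (β - 1) / Chho * Chho = μ * sh * L ^ (β - 1) :=
      div_mul_cancel₀ _ hChho'
    have hstep : Pstar i * ups i =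
        Pbar * ups i + μ * sh * L ^ (β - 1) / Chho * (1 - S * ups i) := by
      simp only [hPstar]
      linear_combination (μ * sh * L ^ (β - 1) / Chho) * (mul_inv_cancel₀ hu)
    rw [hB, hstep]
    linear_combination (L ^ (1 - β) * (1 - S * ups i)) * hc +
      (μ * sh * (1 - S * ups i)) * hLmul
  -- feasibility of Pstar
  have hfeas : Feasible I p ups Chho μ sh L β Pbar Pstar := by
    constructor
    · intro i
      rw [hxstar i]
      exact mul_pos (hups i) hBpos
    · have hsum : ∀ i, p i * Pstar i =
          p i * Pbar + (μ * sh * L ^ (β - 1) / Chho) * (p i / ups i)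
            - (μ * sh * L ^ (β - 1) / Chho) * S * p i := by
        intro i
        have hu : ups i ≠ 0 := ne_of_gt (hups i)
        rw [hPstar]
        field_simp
        ring
      refine le_of_eq ?_
      calc ∑ i, p i * Pstar i
          = ∑ i, (p i * Pbar + (μ * sh * L ^ (β - 1) / Chho) * (p i / ups i)
            - (μ * sh * L ^ (β - 1) / Chho) * S * p i) :=
            Finset.sum_congr rfl fun i _ => hsum i
        _ = Pbar := by
            rw [Finset.sum_sub_distrib, Finset.sum_add_distrib, ← Finset.sum_mul,
              ← Finset.mul_sum, ← Finset.mul_sum, hpsum, ← hS]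
            ring
  refine ⟨hfeas, fun P hP => ?_⟩
  -- notation for denominators
  set x : (Fin I → ℝ) → Fin I → ℝ :=
    fun Q i => (Q i * ups i * L ^ (1 - β)) * Chho - μ * sh with hxdef
  have hxP : ∀ i, 0 < x P i := hP.1
  have hxPs : ∀ i, 0 < x Pstar i := hfeas.1
  -- rewrite loadFactor
  have hlf : ∀ Q : Fin I → ℝ, (∀ i, 0 < x Q i) →
      loadFactor I p ups Cbe Cbh Ceho Chho μ sh lam K L β Q =
        (lam * L ^ 2 / K) * ((∑ i, p i * ups i) * (Cbe - Cbh * Ceho / Chho)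
          + (Cbh * (Chho - μ * sh * Ceho) / Chho) * ∑ i, p i * ups i / x Q i) := by
    intro Q hQ
    unfold loadFactor
    congr 1
    have hpt : ∀ i, p i * ups i *
        (Cbe + Cbh * (1 - (Q i * ups i * L ^ (1 - β)) * Ceho) /
          ((Q i * ups i * L ^ (1 - β)) * Chho - μ * sh)) =
        p i * ups i * (Cbe - Cbh * Ceho / Chho) +
          (Cbh * (Chho - μ * sh * Ceho) / Chho) * (p i * ups i / x Q i) := by
      intro i
      rw [loadFactor_term_eq Cbe Cbh Ceho Chho μ sh (Q i * ups i * L ^ (1 - β)) hChho'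
        (ne_of_gt (hQ i))]
      simp only [hxdef]
      ring
    rw [Finset.sum_congr rfl fun i _ => hpt i, Finset.sum_add_distrib,
      ← Finset.sum_mul, ← Finset.mul_sum]
  rw [hlf P hxP, hlf Pstar hxPs]
  -- reduce to comparing the ∑ p u / x parts
  have hconst : 0 ≤ Cbh * (Chho - μ * sh * Ceho) / Chho := by positivity
  have hconst2 : 0 ≤ lam * L ^ 2 / K := by positivity
  have key : ∑ i, p i * ups i / x Pstar i ≤ ∑ i, p i * ups i / x P i := by
    -- value at Pstar is 1/B
    have hstarval : ∑ i, p i * ups i / x Pstar i = 1 / B := by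
      have : ∀ i, p i * ups i / x Pstar i = p i * (1 / B) := by
        intro i
        rw [show x Pstar i = ups i * B from hxstar i]
        have hu : ups i ≠ 0 := ne_of_gt (hups i)
        field_simp
      rw [Finset.sum_congr rfl fun i _ => this i, ← Finset.sum_mul, hpsum, one_mul]
    rw [hstarval]
    -- Cauchy-Schwarz
    have hcs : (∑ i, p i) ^ 2 ≤
        (∑ i, p i * ups i / x P i) * ∑ i, p i * x P i / ups i := by
      refine Finset.sum_sq_le_sum_mul_sum_of_sq_eq_mul Finset.univ
        (fun i _ => ?_) (fun i _ => ?_) (fun i _ => ?_)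
      · exact le_of_lt (div_pos (mul_pos (hp i) (hups i)) (hxP i))
      · exact le_of_lt (div_pos (mul_pos (hp i) (hxP i)) (hups i))
      · have hu : ups i ≠ 0 := ne_of_gt (hups i)
        have hx' : x P i ≠ 0 := ne_of_gt (hxP i)
        field_simp
    rw [hpsum, one_pow] at hcs
    -- budget bound: ∑ p x / u ≤ B
    have hbnd : ∑ i, p i * x P i / ups i ≤ B := by
      have heach : ∀ i, p i * x P i / ups i =
          (Chho * L ^ (1 - β)) * (p i * P i) - μ * sh * (p i / ups i) := by
        intro i
        have hu : ups i ≠ 0 := ne_of_gt (hups i)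
        rw [hxdef]
        field_simp
      calc ∑ i, p i * x P i / ups i
          = (Chho * L ^ (1 - β)) * (∑ i, p i * P i) - μ * sh * S := by
            rw [Finset.sum_congr rfl fun i _ => heach i, Finset.sum_sub_distrib,
              ← Finset.mul_sum, ← Finset.mul_sum, hS]
        _ ≤ (Chho * L ^ (1 - β)) * Pbar - μ * sh * S := by
            have := hP.2
            have hpos : 0 < Chho * L ^ (1 - β) := mul_pos hChho hL1
            nlinarith
        _ = B := by rw [hB]; ring
    -- combine
    have hobp : 0 < ∑ i, p i * ups i / x P i := by
      apply Finset.sum_pos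
      · intro i _
        exact div_pos (mul_pos (hp i) (hups i)) (hxP i)
      · exact Finset.univ_nonempty_iff.mpr ⟨⟨0, by omega⟩⟩
    have h1 : 1 ≤ (∑ i, p i * ups i / x P i) * B :=
      le_trans hcs (by nlinarith)
    rw [div_le_iff₀ hBpos]
    linarith
  exact mul_le_mul_of_nonneg_left
    (add_le_add_right (mul_le_mul_of_nonneg_left key hconst) _) hconst2
end

section
/- Under the assumption C_{h,ho} − μ s_h C_{e,ho} > 0, the load factor ρ is strictly convex on the open convex set { P ∈ ℝ^I : δ_i(P)·C_{h,ho} − μ s_h > 0 for every i }; consequently ρ has at most one minimizer on any convex subset of this set. -/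
open Finset

/-- Strict convexity of `1/u` along a segment of positives. -/
lemma inv_combo_lt {u v a b : ℝ} (hu : 0 < u) (hv : 0 < v) (huv : u ≠ v)
    (ha : 0 < a) (hb : 0 < b) (hab : a + b = 1) :
    1 / (a * u + b * v) < a * (1 / u) + b * (1 / v) := by
  have huv2 : 0 < (u - v) ^ 2 := by
    have := sub_ne_zero.mpr huv
    positivity
  have h1 : a * (1 / u) + b * (1 / v) = (a * v + b * u) / (u * v) := by
    field_simp
  have h2 : 0 < a * u + b * v := by
    have := mul_pos ha hu; have := mul_pos hb hv; linarith
  rw [h1, div_lt_div_iff₀ h2 (mul_pos hu hv)]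
  have key : (a * v + b * u) * (a * u + b * v) = u * v + a * b * (u - v) ^ 2 := by
    linear_combination (u * v * (a + b + 1)) * hab
  nlinarith [mul_pos (mul_pos ha hb) huv2]

lemma inv_combo_le {u v a b : ℝ} (hu : 0 < u) (hv : 0 < v)
    (ha : 0 < a) (hb : 0 < b) (hab : a + b = 1) :
    1 / (a * u + b * v) ≤ a * (1 / u) + b * (1 / v) := by
  rcases eq_or_ne u v with rfl | h
  · have : a * u + b * u = u := by linear_combination u * hab
    rw [this]
    have : a * (1 / u) + b * (1 / u) = 1 / u := by linear_combination (1/u) * hab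
    rw [this]
  · exact (inv_combo_lt hu hv h ha hb hab).le

/-- Decomposition of the per-class cost as affine + positive multiple of `1/u`. -/
lemma term_decomp (Cbe Cbh Ceho Chho μ sh t : ℝ) (hChho : Chho ≠ 0)
    (ht : t * Chho - μ * sh ≠ 0) :
    Cbe + Cbh * (1 - t * Ceho) / (t * Chho - μ * sh) =
      (Cbe - Cbh * Ceho / Chho) +
        (Cbh * (Chho - μ * sh * Ceho) / Chho) * (1 / (t * Chho - μ * sh)) := by
  field_simp
  ring

/-- Strict per-term inequality. -/
lemma term_lt (Cbe Cbh Ceho Chho μ sh w t1 t2 a b : ℝ)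
    (hw : 0 < w) (hCbh : 0 < Cbh) (hChho : 0 < Chho) (hC : 0 < Chho - μ * sh * Ceho)
    (h1 : 0 < t1 * Chho - μ * sh) (h2 : 0 < t2 * Chho - μ * sh) (hne : t1 ≠ t2)
    (ha : 0 < a) (hb : 0 < b) (hab : a + b = 1) :
    w * (Cbe + Cbh * (1 - (a * t1 + b * t2) * Ceho) /
        ((a * t1 + b * t2) * Chho - μ * sh)) <
      a * (w * (Cbe + Cbh * (1 - t1 * Ceho) / (t1 * Chho - μ * sh))) +
      b * (w * (Cbe + Cbh * (1 - t2 * Ceho) / (t2 * Chho - μ * sh))) := by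
  have huz : (a * t1 + b * t2) * Chho - μ * sh =
      a * (t1 * Chho - μ * sh) + b * (t2 * Chho - μ * sh) := by
    linear_combination (μ * sh) * hab
  have hz : 0 < (a * t1 + b * t2) * Chho - μ * sh := by
    rw [huz]
    have := mul_pos ha h1; have := mul_pos hb h2; linarith
  have hune : t1 * Chho - μ * sh ≠ t2 * Chho - μ * sh := by
    intro h
    exact hne (mul_right_cancel₀ hChho.ne' (by linarith))
  rw [term_decomp Cbe Cbh Ceho Chho μ sh t1 hChho.ne' h1.ne',
      term_decomp Cbe Cbh Ceho Chho μ sh t2 hChho.ne' h2.ne',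
      term_decomp Cbe Cbh Ceho Chho μ sh _ hChho.ne' hz.ne', huz]
  set D := Cbe - Cbh * Ceho / Chho with hD
  set E := Cbh * (Chho - μ * sh * Ceho) / Chho with hE
  have hEpos : 0 < E := by rw [hE]; exact div_pos (mul_pos hCbh hC) hChho
  have hinv := inv_combo_lt h1 h2 hune ha hb hab
  have h3 : w * E * (1 / (a * (t1 * Chho - μ * sh) + b * (t2 * Chho - μ * sh))) <
      w * E * (a * (1 / (t1 * Chho - μ * sh)) + b * (1 / (t2 * Chho - μ * sh))) :=
    mul_lt_mul_of_pos_left hinv (mul_pos hw hEpos)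
  have hDeq : a * (w * (D + E * (1 / (t1 * Chho - μ * sh)))) +
      b * (w * (D + E * (1 / (t2 * Chho - μ * sh)))) =
      w * D + w * E * (a * (1 / (t1 * Chho - μ * sh)) + b * (1 / (t2 * Chho - μ * sh))) := by
    linear_combination (w * D) * hab
  rw [hDeq]
  nlinarith [h3]

/-- Non-strict per-term inequality. -/
lemma term_le (Cbe Cbh Ceho Chho μ sh w t1 t2 a b : ℝ)
    (hw : 0 < w) (hCbh : 0 < Cbh) (hChho : 0 < Chho) (hC : 0 < Chho - μ * sh * Ceho)
    (h1 : 0 < t1 * Chho - μ * sh) (h2 : 0 < t2 * Chho - μ * sh)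
    (ha : 0 < a) (hb : 0 < b) (hab : a + b = 1) :
    w * (Cbe + Cbh * (1 - (a * t1 + b * t2) * Ceho) /
        ((a * t1 + b * t2) * Chho - μ * sh)) ≤
      a * (w * (Cbe + Cbh * (1 - t1 * Ceho) / (t1 * Chho - μ * sh))) +
      b * (w * (Cbe + Cbh * (1 - t2 * Ceho) / (t2 * Chho - μ * sh))) := by
  rcases eq_or_ne t1 t2 with rfl | hne
  · have hz : a * t1 + b * t1 = t1 := by linear_combination t1 * hab
    rw [hz]
    have : a * (w * (Cbe + Cbh * (1 - t1 * Ceho) / (t1 * Chho - μ * sh))) +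
        b * (w * (Cbe + Cbh * (1 - t1 * Ceho) / (t1 * Chho - μ * sh))) =
        w * (Cbe + Cbh * (1 - t1 * Ceho) / (t1 * Chho - μ * sh)) := by
      linear_combination (w * (Cbe + Cbh * (1 - t1 * Ceho) / (t1 * Chho - μ * sh))) * hab
    rw [this]
  · exact (term_lt Cbe Cbh Ceho Chho μ sh w t1 t2 a b hw hCbh hChho hC h1 h2 hne ha hb hab).le

/-- Under `C_{h,ho} - μ s_h C_{e,ho} > 0` the load factor is strictly convex on the
open convex set of power vectors with positive denominators; consequently it has at
most one minimizer on any convex subset of this set. -/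
theorem loadFactor_strictConvexOn (I : ℕ) (hI : 2 ≤ I) (p ups : Fin I → ℝ)
    (hp : ∀ i, 0 < p i) (hpsum : ∑ i, p i = 1) (hups : ∀ i, 0 < ups i)
    (Cbe Cbh Ceho Chho μ sh lam K L β : ℝ)
    (hCbe : 0 < Cbe) (hCbh : 0 < Cbh) (hCeho : 0 < Ceho) (hChho : 0 < Chho)
    (hμ : 0 < μ) (hsh : 0 < sh) (hlam : 0 < lam) (hK : 0 < K) (hL : 0 < L)
    (hβ : 1 < β)
    (hC : 0 < Chho - μ * sh * Ceho) :
    StrictConvexOn ℝ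
      {P : Fin I → ℝ | ∀ i, 0 < (P i * ups i * L ^ (1 - β)) * Chho - μ * sh}
      (loadFactor I p ups Cbe Cbh Ceho Chho μ sh lam K L β) ∧
    ∀ T : Set (Fin I → ℝ),
      T ⊆ {P : Fin I → ℝ | ∀ i, 0 < (P i * ups i * L ^ (1 - β)) * Chho - μ * sh} →
      Convex ℝ T →
      ∀ x ∈ T, ∀ y ∈ T,
        IsMinOn (loadFactor I p ups Cbe Cbh Ceho Chho μ sh lam K L β) T x →
        IsMinOn (loadFactor I p ups Cbe Cbh Ceho Chho μ sh lam K L β) T y →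
        x = y := by
  have hCpos : 0 < lam * L ^ 2 / K := by positivity
  have hsconv : StrictConvexOn ℝ
      {P : Fin I → ℝ | ∀ i, 0 < (P i * ups i * L ^ (1 - β)) * Chho - μ * sh}
      (loadFactor I p ups Cbe Cbh Ceho Chho μ sh lam K L β) := by
    constructor
    · -- convexity of the set
      intro x hx y hy a b ha hb hab
      intro i
      have h1 := hx i
      have h2 := hy i
      simp only [Pi.add_apply, Pi.smul_apply, smul_eq_mul]
      have key : ((a * x i + b * y i) * ups i * L ^ (1 - β)) * Chho - μ * sh =
          a * ((x i * ups i * L ^ (1 - β)) * Chho - μ * sh) +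
          b * ((y i * ups i * L ^ (1 - β)) * Chho - μ * sh) := by
        linear_combination (μ * sh) * hab
      rw [key]
      rcases ha.eq_or_lt with rfl | ha'
      · have hb1 : b = 1 := by linarith
        have := mul_pos (show (0:ℝ) < b by linarith) h2
        linarith [mul_nonneg ha h1.le]
      · rcases hb.eq_or_lt with rfl | hb'
        · have := mul_pos ha' h1
          linarith [mul_nonneg hb h2.le]
        · have := mul_pos ha' h1
          have := mul_pos hb' h2
          linarith
    · -- strict inequality
      intro x hx y hy hxy a b ha hb hab
      obtain ⟨j, hj⟩ := Function.ne_iff.mp hxy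
      have hzapp : ∀ i, ((a • x + b • y) i * ups i * L ^ (1 - β)) =
          a * (x i * ups i * L ^ (1 - β)) + b * (y i * ups i * L ^ (1 - β)) := by
        intro i
        simp only [Pi.add_apply, Pi.smul_apply, smul_eq_mul]
        ring
      have hsum : ∑ i, p i * ups i *
          (Cbe + Cbh * (1 - ((a • x + b • y) i * ups i * L ^ (1 - β)) * Ceho) /
            (((a • x + b • y) i * ups i * L ^ (1 - β)) * Chho - μ * sh)) <
          ∑ i, (a * (p i * ups i *
            (Cbe + Cbh * (1 - (x i * ups i * L ^ (1 - β)) * Ceho) /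
              ((x i * ups i * L ^ (1 - β)) * Chho - μ * sh))) +
            b * (p i * ups i *
            (Cbe + Cbh * (1 - (y i * ups i * L ^ (1 - β)) * Ceho) /
              ((y i * ups i * L ^ (1 - β)) * Chho - μ * sh)))) := by
        apply Finset.sum_lt_sum
        · intro i _
          rw [hzapp i]
          exact term_le Cbe Cbh Ceho Chho μ sh _ _ _ a b
            (mul_pos (hp i) (hups i)) hCbh hChho hC (hx i) (hy i) ha hb hab
        · refine ⟨j, Finset.mem_univ j, ?_⟩
          rw [hzapp j]
          have hne : x j * ups j * L ^ (1 - β) ≠ y j * ups j * L ^ (1 - β) := by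
            intro h
            apply hj
            have hc : (0:ℝ) < ups j * L ^ (1 - β) :=
              mul_pos (hups j) (Real.rpow_pos_of_pos hL _)
            have : x j * (ups j * L ^ (1 - β)) = y j * (ups j * L ^ (1 - β)) := by
              linear_combination h
            exact mul_right_cancel₀ hc.ne' this
          exact term_lt Cbe Cbh Ceho Chho μ sh _ _ _ a b
            (mul_pos (hp j) (hups j)) hCbh hChho hC (hx j) (hy j) hne ha hb hab
      unfold loadFactor
      calc (lam * L ^ 2 / K) * ∑ i, p i * ups i *
          (Cbe + Cbh * (1 - ((a • x + b • y) i * ups i * L ^ (1 - β)) * Ceho) /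
            (((a • x + b • y) i * ups i * L ^ (1 - β)) * Chho - μ * sh))
          < (lam * L ^ 2 / K) * ∑ i, (a * (p i * ups i *
            (Cbe + Cbh * (1 - (x i * ups i * L ^ (1 - β)) * Ceho) /
              ((x i * ups i * L ^ (1 - β)) * Chho - μ * sh))) +
            b * (p i * ups i *
            (Cbe + Cbh * (1 - (y i * ups i * L ^ (1 - β)) * Ceho) /
              ((y i * ups i * L ^ (1 - β)) * Chho - μ * sh)))) :=
          mul_lt_mul_of_pos_left hsum hCpos
        _ = a * ((lam * L ^ 2 / K) * ∑ i, p i * ups i *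
            (Cbe + Cbh * (1 - (x i * ups i * L ^ (1 - β)) * Ceho) /
              ((x i * ups i * L ^ (1 - β)) * Chho - μ * sh))) +
            b * ((lam * L ^ 2 / K) * ∑ i, p i * ups i *
            (Cbe + Cbh * (1 - (y i * ups i * L ^ (1 - β)) * Ceho) /
              ((y i * ups i * L ^ (1 - β)) * Chho - μ * sh))) := by
          rw [Finset.sum_add_distrib, ← Finset.mul_sum, ← Finset.mul_sum]
          ring
  refine ⟨hsconv, ?_⟩
  intro T hT hTconv x hxT y hyT hminx hminy
  exact (hsconv.subset hT hTconv).eq_of_isMinOn hminx hminy hxT hyT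
end

section
/- Let λ, K, P̃, C_{h,ho}, μ, s_h, ω_P, C_{ρ,1}, C_{ρ,2} > 0 and a > 0, b > 0 (playing the roles of E[V] and E[1/V]). Define the joint cost ℏ(L) := (λL²/K)·( C_{ρ,1}·b + C_{ρ,2}/(P̃·C_{h,ho}·L² − a·μ s_h) ) + ω_P·P̃·L² on the domain { L > 0 : P̃·C_{h,ho}·L² > a·μ s_h }. Then ℏ attains its minimum at the unique point L* = √( (√(μ s_h·a)/(P̃·C_{h,ho}))·( √( C_{ρ,2}/(C_{ρ,1}·b + ω_P·P̃·K/λ) ) + √(a·μ s_h) ) ). -/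
/-- The joint cost `ℏ(L)` (load factor at the optimal power law plus power penalty)
for path-loss factor `β = 2` and beta+ scaling exponent `γ = 1`. -/
noncomputable def jointCost (lam K Pt Chho μ sh ω C1 C2 a b L : ℝ) : ℝ :=
  (lam * L ^ 2 / K) * (C1 * b + C2 / (Pt * Chho * L ^ 2 - a * μ * sh)) +
    ω * Pt * L ^ 2

/-- Key algebraic identity: the excess cost over the candidate minimum is an
explicit nonnegative square. -/
lemma aux_diff (A B p m s x : ℝ) (hp : 0 < p) (hm : 0 < m) (hs : 0 < s)
    (hs2 : A * s ^ 2 = B * m) (hx : m < p * x) :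
    (A * x + B * x / (p * x - m)) -
      (A * ((s + m) / p) + B * ((s + m) / p) / (p * ((s + m) / p) - m)) =
    A * (p * x - m - s) ^ 2 / (p * (p * x - m)) := by
  have hy : p * x - m ≠ 0 := ne_of_gt (by linarith)
  have hps : p * ((s + m) / p) - m = s := by field_simp; ring
  rw [hps]
  have hB : B = A * s ^ 2 / m := by field_simp; linarith [hs2]
  rw [hB]
  have hy' : x * p - m ≠ 0 := by rw [mul_comm]; exact hy
  field_simp
  ring

/-- The optimal cell size for `β = 2`, `γ = 1`: the joint cost attains its minimum
on `{L > 0 : P̃ C_{h,ho} L² > a μ s_h}` at the unique point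
`L* = √( (√(μ s_h a)/(P̃ C_{h,ho}))(√(C_{ρ,2}/(C_{ρ,1} b + ω P̃ K/λ)) + √(a μ s_h)) )`. -/
theorem optimal_cell_size (lam K Pt Chho μ sh ω C1 C2 a b : ℝ)
    (hlam : 0 < lam) (hK : 0 < K) (hPt : 0 < Pt) (hChho : 0 < Chho)
    (hμ : 0 < μ) (hsh : 0 < sh) (hω : 0 < ω) (hC1 : 0 < C1) (hC2 : 0 < C2)
    (ha : 0 < a) (hb : 0 < b) :
    (0 < Real.sqrt ((Real.sqrt (μ * sh * a) / (Pt * Chho)) *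
        (Real.sqrt (C2 / (C1 * b + ω * Pt * K / lam)) + Real.sqrt (a * μ * sh))) ∧
      a * μ * sh < Pt * Chho *
        (Real.sqrt ((Real.sqrt (μ * sh * a) / (Pt * Chho)) *
          (Real.sqrt (C2 / (C1 * b + ω * Pt * K / lam)) + Real.sqrt (a * μ * sh)))) ^ 2) ∧
    (∀ L : ℝ, 0 < L → a * μ * sh < Pt * Chho * L ^ 2 →
      jointCost lam K Pt Chho μ sh ω C1 C2 a b
          (Real.sqrt ((Real.sqrt (μ * sh * a) / (Pt * Chho)) *
            (Real.sqrt (C2 / (C1 * b + ω * Pt * K / lam)) + Real.sqrt (a * μ * sh))))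
        ≤ jointCost lam K Pt Chho μ sh ω C1 C2 a b L) ∧
    (∀ L : ℝ, 0 < L → a * μ * sh < Pt * Chho * L ^ 2 →
      jointCost lam K Pt Chho μ sh ω C1 C2 a b L =
        jointCost lam K Pt Chho μ sh ω C1 C2 a b
          (Real.sqrt ((Real.sqrt (μ * sh * a) / (Pt * Chho)) *
            (Real.sqrt (C2 / (C1 * b + ω * Pt * K / lam)) + Real.sqrt (a * μ * sh)))) →
      L = Real.sqrt ((Real.sqrt (μ * sh * a) / (Pt * Chho)) *
            (Real.sqrt (C2 / (C1 * b + ω * Pt * K / lam)) + Real.sqrt (a * μ * sh)))) := by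
  set D := C1 * b + ω * Pt * K / lam with hDdef
  set m := a * μ * sh with hmdef
  set p := Pt * Chho with hpdef
  set A := lam * C1 * b / K + ω * Pt with hAdef
  set B := lam * C2 / K with hBdef
  set s := Real.sqrt (m * (C2 / D)) with hsdef
  have hD : 0 < D := by rw [hDdef]; positivity
  have hm : 0 < m := by rw [hmdef]; positivity
  have hp : 0 < p := by rw [hpdef]; positivity
  have hA : 0 < A := by rw [hAdef]; positivity
  have hB : 0 < B := by rw [hBdef]; positivity
  have hs : 0 < s := by rw [hsdef]; apply Real.sqrt_pos.mpr; positivity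
  have hs2 : s ^ 2 = m * (C2 / D) := Real.sq_sqrt (by positivity)
  have hABs : A * s ^ 2 = B * m := by
    rw [hs2, hAdef, hBdef, hDdef]
    field_simp
  -- identify the sqrt argument
  have h1 : Real.sqrt (μ * sh * a) = Real.sqrt m := by
    rw [hmdef]; congr 1; ring
  have h2 : Real.sqrt m * Real.sqrt (C2 / D) = s := by
    rw [hsdef, ← Real.sqrt_mul hm.le]
  have hE : Real.sqrt (μ * sh * a) / p * (Real.sqrt (C2 / D) + Real.sqrt m) =
      (s + m) / p := by
    rw [h1, div_mul_eq_mul_div, mul_add, h2, Real.mul_self_sqrt hm.le]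
  rw [hE]
  have hX : 0 < (s + m) / p := by positivity
  have hLs : 0 < Real.sqrt ((s + m) / p) := Real.sqrt_pos.mpr hX
  have hLsq : (Real.sqrt ((s + m) / p)) ^ 2 = (s + m) / p := Real.sq_sqrt hX.le
  have hpX : p * ((s + m) / p) = s + m := by field_simp
  have hJC : ∀ L : ℝ, jointCost lam K Pt Chho μ sh ω C1 C2 a b L =
      A * L ^ 2 + B * L ^ 2 / (p * L ^ 2 - m) := by
    intro L
    unfold jointCost
    rw [hAdef, hBdef, hpdef, hmdef]
    ring
  refine ⟨⟨hLs, by rw [hLsq, hpX]; linarith⟩, ?_, ?_⟩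
  · intro L hL hcond
    rw [hJC, hJC, hLsq]
    have hy : 0 < p * L ^ 2 - m := by linarith
    have key := aux_diff A B p m s (L ^ 2) hp hm hs hABs hcond
    have hnn : 0 ≤ A * (p * L ^ 2 - m - s) ^ 2 / (p * (p * L ^ 2 - m)) :=
      div_nonneg (mul_nonneg hA.le (sq_nonneg _)) (mul_pos hp hy).le
    linarith
  · intro L hL hcond heq
    rw [hJC, hJC, hLsq] at heq
    have hy : 0 < p * L ^ 2 - m := by linarith
    have key := aux_diff A B p m s (L ^ 2) hp hm hs hABs hcond
    rw [heq] at key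
    have h0 : A * (p * L ^ 2 - m - s) ^ 2 / (p * (p * L ^ 2 - m)) = 0 := by
      linarith
    have hden : p * (p * L ^ 2 - m) ≠ 0 := ne_of_gt (mul_pos hp hy)
    have h0' : A * (p * L ^ 2 - m - s) ^ 2 = 0 := by
      field_simp at h0; rw [mul_zero] at h0; exact h0
    have h0'' : (p * L ^ 2 - m - s) ^ 2 = 0 := by
      rcases mul_eq_zero.mp h0' with h | h
      · exact absurd h (ne_of_gt hA)
      · exact h
    have hyss : p * L ^ 2 - m - s = 0 := by
      exact pow_eq_zero_iff (by norm_num) |>.mp h0''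
    have hL2 : L ^ 2 = (s + m) / p := by
      field_simp
      linarith
    have : L = Real.sqrt (L ^ 2) := (Real.sqrt_sq hL.le).symm
    rw [this, hL2]
end

section
/- The optimal cell size is strictly decreasing in the power weight: with all other constants fixed and positive, the function ω ↦ L*(ω) := √( (√(μ s_h·a)/(P̃·C_{h,ho}))·( √( C_{ρ,2}/(C_{ρ,1}·b + ω·P̃·K/λ) ) + √(a·μ s_h) ) ) is strictly decreasing on (0, ∞). -/
/-- The optimal cell size `L*` (case `β = 2`, `γ = 1` of beta+ scaling) as a
function of the power weight `ω` and of `a = E[V]`, `b = E[1/V]`. -/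
noncomputable def optCellSize (μ sh Pt Chho C2 C1 K lam : ℝ) (a b ω : ℝ) : ℝ :=
  Real.sqrt ((Real.sqrt (μ * sh * a) / (Pt * Chho)) *
    (Real.sqrt (C2 / (C1 * b + ω * Pt * K / lam)) + Real.sqrt (a * μ * sh)))

/-- The optimal cell size is strictly decreasing in the power weight `ω` on `(0, ∞)`. -/
theorem optCellSize_strictAnti_in_weight (μ sh Pt Chho C2 C1 K lam a b : ℝ)
    (hμ : 0 < μ) (hsh : 0 < sh) (hPt : 0 < Pt) (hChho : 0 < Chho)
    (hC2 : 0 < C2) (hC1 : 0 < C1) (hK : 0 < K) (hlam : 0 < lam)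
    (ha : 0 < a) (hb : 0 < b) :
    StrictAntiOn (fun ω => optCellSize μ sh Pt Chho C2 C1 K lam a b ω)
      (Set.Ioi (0 : ℝ)) := by
  intro x hx y hy hxy
  simp only [optCellSize]
  have hc : 0 < Real.sqrt (μ * sh * a) / (Pt * Chho) :=
    div_pos (Real.sqrt_pos.mpr (by positivity)) (by positivity)
  have hdx : 0 < C1 * b + x * Pt * K / lam := by
    have : 0 < x := hx
    positivity
  have hdy : 0 < C1 * b + y * Pt * K / lam := by
    have : 0 < y := hy
    positivity
  have hlt : C2 / (C1 * b + y * Pt * K / lam) < C2 / (C1 * b + x * Pt * K / lam) := by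
    apply div_lt_div_of_pos_left hC2 hdx
    have : x * Pt * K / lam < y * Pt * K / lam := by
      apply div_lt_div_of_pos_right _ hlam
      have := mul_lt_mul_of_pos_right (mul_lt_mul_of_pos_right hxy hPt) hK
      linarith
    linarith
  apply Real.sqrt_lt_sqrt (by positivity)
  apply mul_lt_mul_of_pos_left _ hc
  have := Real.sqrt_lt_sqrt (le_of_lt (div_pos hC2 hdy)) hlt
  linarith
end
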